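/- In a homogeneous 2-partite digraph D = (X,Y,E) that is not bipartite, if two distinct vertices u, v ∈ X had N⁺(u) = N⁺(v), then every vertex w ∈ X would satisfy N⁺(w) = N⁺(u), and consequently no vertex of N⁺(u) would have a successor in X — a contradiction; hence no two distinct vertices on the same side have equal out-neighbourhoods. -/

import Mathlib

/-- A 2-partite digraph `D = (X, Y, E)`: `X` and `Y` are disjoint sets covering the
vertex set, every edge goes between the two sides, and no two opposite edges exist. -/
structure TwoPartiteDigraph (V : Type*) where
  X : Set V
  Y : Set V
  cover : X ∪ Y = Set.univ
  disj : Disjoint X Y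
  E : V → V → Prop
  mem_of_edge : ∀ u v, E u v → (u ∈ X ∧ v ∈ Y) ∨ (u ∈ Y ∧ v ∈ X)
  not_opposite : ∀ u v, E u v → ¬ E v u

namespace TwoPartiteDigraph

variable {V V₁ V₂ : Type*}

/-- Out-neighbourhood (successors). -/
def Nplus (D : TwoPartiteDigraph V) (v : V) : Set V := {w | D.E v w}

/-- In-neighbourhood (predecessors). -/
def Nminus (D : TwoPartiteDigraph V) (v : V) : Set V := {w | D.E w v}

/-- Adjacency in the underlying undirected bipartite graph. -/
def Adj (D : TwoPartiteDigraph V) (u v : V) : Prop := D.E u v ∨ D.E v u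

/-- `v^⊥`: the vertices on the other side not adjacent to `v`. -/
def perp (D : TwoPartiteDigraph V) (v : V) : Set V :=
  {w | ((v ∈ D.X ∧ w ∈ D.Y) ∨ (v ∈ D.Y ∧ w ∈ D.X)) ∧ ¬ D.Adj v w}

/-- `D` is bipartite if all edges go from `X` to `Y`, or all from `Y` to `X`. -/
def Bipartite (D : TwoPartiteDigraph V) : Prop :=
  (∀ u v, D.E u v → u ∈ D.X) ∨ (∀ u v, D.E u v → u ∈ D.Y)

/-- `φ` is an isomorphism between the subdigraphs induced on `A` and on `φ '' A`,
respecting the bipartition. -/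
def IsPartialIso (D : TwoPartiteDigraph V) (A : Set V) (φ : V → V) : Prop :=
  Set.InjOn φ A ∧ (∀ a ∈ A, (a ∈ D.X ↔ φ a ∈ D.X)) ∧ (∀ a ∈ A, (a ∈ D.Y ↔ φ a ∈ D.Y)) ∧
  ∀ a ∈ A, ∀ b ∈ A, (D.E a b ↔ D.E (φ a) (φ b))

/-- A bipartition-preserving automorphism of `D`. -/
def IsAuto (D : TwoPartiteDigraph V) (α : Equiv.Perm V) : Prop :=
  (∀ v, v ∈ D.X ↔ α v ∈ D.X) ∧ (∀ v, v ∈ D.Y ↔ α v ∈ D.Y) ∧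
  ∀ u v, D.E u v ↔ D.E (α u) (α v)

/-- `D` is homogeneous: every isomorphism between finite induced subdigraphs respecting
the bipartition extends to a bipartition-preserving automorphism of `D`. -/
def Homogeneous (D : TwoPartiteDigraph V) : Prop :=
  ∀ A : Set V, A.Finite → ∀ φ : V → V, D.IsPartialIso A φ →
    ∃ α : Equiv.Perm V, D.IsAuto α ∧ ∀ a ∈ A, α a = φ a

/-- The underlying undirected bipartite graph is complete bipartite. -/
def CompleteBip (D : TwoPartiteDigraph V) : Prop := ∀ x ∈ D.X, ∀ y ∈ D.Y, D.Adj x y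

/-- `D` is a generic 2-partite digraph. -/
def IsGeneric (D : TwoPartiteDigraph V) : Prop :=
  D.CompleteBip ∧
  ∀ AX BX : Set V, AX.Finite → BX.Finite → AX ⊆ D.X → BX ⊆ D.X → Disjoint AX BX →
  ∀ AY BY : Set V, AY.Finite → BY.Finite → AY ⊆ D.Y → BY ⊆ D.Y → Disjoint AY BY →
    (∃ y ∈ D.Y, AX ⊆ D.Nplus y ∧ BX ⊆ D.Nminus y) ∧
    (∃ x ∈ D.X, AY ⊆ D.Nplus x ∧ BY ⊆ D.Nminus x)

/-- `D` is a generic orientation of a generic bipartite graph. -/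
def IsGenericOrientation (D : TwoPartiteDigraph V) : Prop :=
  ∀ AX BX CX : Set V, AX.Finite → BX.Finite → CX.Finite →
    AX ⊆ D.X → BX ⊆ D.X → CX ⊆ D.X →
    Disjoint AX BX → Disjoint AX CX → Disjoint BX CX →
  ∀ AY BY CY : Set V, AY.Finite → BY.Finite → CY.Finite →
    AY ⊆ D.Y → BY ⊆ D.Y → CY ⊆ D.Y →
    Disjoint AY BY → Disjoint AY CY → Disjoint BY CY →
    (∃ y ∈ D.Y, AX ⊆ D.Nplus y ∧ BX ⊆ D.Nminus y ∧ CX ⊆ D.perp y) ∧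
    (∃ x ∈ D.X, AY ⊆ D.Nplus x ∧ BY ⊆ D.Nminus x ∧ CY ⊆ D.perp x)

/-- `D` is (a copy of) `M_κ` with the matching oriented from `X` to `Y`:
there is a bijection `m : X → Y` such that the edges from `X` to `Y` form the
perfect matching `{(x, m x)}` and the edges from `Y` to `X` form its bipartite
complement. -/
def IsMFixed (D : TwoPartiteDigraph V) : Prop :=
  ∃ m : V → V, Set.BijOn m D.X D.Y ∧
    (∀ x ∈ D.X, ∀ y ∈ D.Y, (D.E x y ↔ y = m x)) ∧
    (∀ x ∈ D.X, ∀ y ∈ D.Y, (D.E y x ↔ y ≠ m x))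

/-- `D` is (a copy of) `M_κ`: one of the two directed parts is a perfect matching and
the other is the bipartite complement of a perfect matching. -/
def IsM (D : TwoPartiteDigraph V) : Prop :=
  ∃ m : V → V, Set.BijOn m D.X D.Y ∧
    ((∀ x ∈ D.X, ∀ y ∈ D.Y, (D.E x y ↔ y = m x) ∧ (D.E y x ↔ y ≠ m x)) ∨
     (∀ x ∈ D.X, ∀ y ∈ D.Y, (D.E y x ↔ y = m x) ∧ (D.E x y ↔ y ≠ m x)))

/-- Isomorphism of 2-partite digraphs respecting the bipartitions. -/
def Isomorphic (D₁ : TwoPartiteDigraph V₁) (D₂ : TwoPartiteDigraph V₂) : Prop :=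
  ∃ e : V₁ ≃ V₂, (∀ v, v ∈ D₁.X ↔ e v ∈ D₂.X) ∧ (∀ v, v ∈ D₁.Y ↔ e v ∈ D₂.Y) ∧
    ∀ u v, D₁.E u v ↔ D₂.E (e u) (e v)

/-- `φ` is an isomorphism of finite induced subgraphs of the underlying undirected
bipartite graph, respecting the bipartition. -/
def IsGraphPartialIso (D : TwoPartiteDigraph V) (A : Set V) (φ : V → V) : Prop :=
  Set.InjOn φ A ∧ (∀ a ∈ A, (a ∈ D.X ↔ φ a ∈ D.X)) ∧ (∀ a ∈ A, (a ∈ D.Y ↔ φ a ∈ D.Y)) ∧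
  ∀ a ∈ A, ∀ b ∈ A, (D.Adj a b ↔ D.Adj (φ a) (φ b))

/-- The underlying undirected bipartite graph of `D` is homogeneous. -/
def GraphHomogeneous (D : TwoPartiteDigraph V) : Prop :=
  ∀ A : Set V, A.Finite → ∀ φ : V → V, D.IsGraphPartialIso A φ →
    ∃ α : Equiv.Perm V, ((∀ v, v ∈ D.X ↔ α v ∈ D.X) ∧ (∀ v, v ∈ D.Y ↔ α v ∈ D.Y) ∧
      ∀ u v, D.Adj u v ↔ D.Adj (α u) (α v)) ∧ ∀ a ∈ A, α a = φ a

/-- The underlying undirected bipartite graph of `D` is generic. -/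
def UnderlyingGeneric (D : TwoPartiteDigraph V) : Prop :=
  ∀ UX VX : Set V, UX.Finite → VX.Finite → UX ⊆ D.X → VX ⊆ D.X → Disjoint UX VX →
  ∀ UY VY : Set V, UY.Finite → VY.Finite → UY ⊆ D.Y → VY ⊆ D.Y → Disjoint UY VY →
    (∃ y ∈ D.Y, (∀ u ∈ UX, D.Adj y u) ∧ ∀ v ∈ VX, ¬ D.Adj y v) ∧
    (∃ x ∈ D.X, (∀ u ∈ UY, D.Adj x u) ∧ ∀ v ∈ VY, ¬ D.Adj x v)

end TwoPartiteDigraph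

/-!
Homogeneity makes the pointwise stabiliser of any `u ∈ X` transitive on `X \ {u}`, and
automorphisms transport out-neighbourhoods. So if `N⁺(u) = N⁺(v)` for some `v ≠ u` in `X`, then
all of `X` shares the out-neighbourhood `N⁺(u)`, whose vertices can then have no successor in `X`
(that would be an opposite pair of edges). But a non-bipartite `D` has an edge `a → b` from `X` to
`Y` and an edge `c → d` from `Y` to `X`, and an automorphism moving `b` to `c` puts `c` in the
common out-neighbourhood, a contradiction. The side `Y` is handled by exchanging the two sides.
-/

namespace TwoPartiteDigraph

variable {V : Type*} (D : TwoPartiteDigraph V)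

def swap : TwoPartiteDigraph V where
  X := D.Y
  Y := D.X
  cover := by rw [Set.union_comm]; exact D.cover
  disj := D.disj.symm
  E := D.E
  mem_of_edge u v h := (D.mem_of_edge u v h).symm
  not_opposite := D.not_opposite

variable {D}

theorem isAuto_swap_iff {α : Equiv.Perm V} : D.swap.IsAuto α ↔ D.IsAuto α :=
  ⟨fun ⟨hX, hY, hE⟩ => ⟨hY, hX, hE⟩, fun ⟨hX, hY, hE⟩ => ⟨hY, hX, hE⟩⟩

theorem Homogeneous.swap (hD : D.Homogeneous) : D.swap.Homogeneous := by
  intro A hA φ ⟨hinj, hX, hY, hE⟩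
  obtain ⟨α, hα, hαφ⟩ := hD A hA φ ⟨hinj, hY, hX, hE⟩
  exact ⟨α, isAuto_swap_iff.mpr hα, hαφ⟩

theorem bipartite_swap_iff : D.swap.Bipartite ↔ D.Bipartite := Or.comm

theorem not_E_of_mem_X {a b : V} (ha : a ∈ D.X) (hb : b ∈ D.X) : ¬ D.E a b := by
  intro h
  rcases D.mem_of_edge a b h with ⟨-, hbY⟩ | ⟨haY, -⟩
  · exact Set.disjoint_left.mp D.disj hb hbY
  · exact Set.disjoint_left.mp D.disj ha haY

theorem exists_E_of_mem_Y_of_not_bipartite (hD : ¬ D.Bipartite) :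
    ∃ c d, c ∈ D.Y ∧ d ∈ D.X ∧ D.E c d := by
  obtain ⟨c, d, hcd, hcX⟩ : ∃ c d, D.E c d ∧ c ∉ D.X := by
    simpa only [Bipartite, not_or, not_forall, exists_prop] using (not_or.mp hD).1
  rcases D.mem_of_edge c d hcd with ⟨hc, -⟩ | ⟨hc, hd⟩
  · exact absurd hc hcX
  · exact ⟨c, d, hc, hd, hcd⟩

theorem IsAuto.Nplus_apply {α : Equiv.Perm V} (hα : D.IsAuto α) (x : V) :
    D.Nplus (α x) = α '' D.Nplus x := by
  ext y
  have hE := hα.2.2 x (α.symm y)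
  rw [α.apply_symm_apply] at hE
  rw [Set.mem_image_equiv]
  exact hE.symm

/-- Within one side there are no edges, so every injection of a finite subset of `X` into `X` is
a partial isomorphism. -/
theorem Homogeneous.exists_isAuto_of_subset_X (hD : D.Homogeneous) {A : Set V} (hA : A.Finite)
    (hAX : A ⊆ D.X) {φ : V → V} (hφ : Set.InjOn φ A) (hφX : Set.MapsTo φ A D.X) :
    ∃ α : Equiv.Perm V, D.IsAuto α ∧ ∀ a ∈ A, α a = φ a :=
  hD A hA φ
    ⟨hφ,
     fun _ ha => iff_of_true (hAX ha) (hφX ha),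
     fun _ ha => iff_of_false (Set.disjoint_left.mp D.disj (hAX ha))
       (Set.disjoint_left.mp D.disj (hφX ha)),
     fun _ ha _ hb => iff_of_false (not_E_of_mem_X (hAX ha) (hAX hb))
       (not_E_of_mem_X (hφX ha) (hφX hb))⟩

theorem Homogeneous.exists_isAuto_fix_apply_eq (hD : D.Homogeneous) {u v w : V}
    (hu : u ∈ D.X) (hv : v ∈ D.X) (hw : w ∈ D.X) (huv : u ≠ v) (huw : u ≠ w) :
    ∃ α : Equiv.Perm V, D.IsAuto α ∧ α u = u ∧ α v = w := by
  classical
  have hφu : Function.update id v w u = u := Function.update_of_ne huv w id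
  have hφv : Function.update id v w v = w := Function.update_self v w id
  obtain ⟨α, hα, hαφ⟩ := hD.exists_isAuto_of_subset_X (A := {u, v}) (Set.toFinite _)
    (Set.insert_subset hu (Set.singleton_subset_iff.mpr hv))
    (φ := Function.update id v w)
    (Set.injOn_pair.mpr fun h => absurd (hφu.symm.trans (h.trans hφv)) huw)
    (by
      rintro x (rfl | rfl)
      · rwa [hφu]
      · rwa [hφv])
  exact ⟨α, hα, (hαφ u (by simp)).trans hφu, (hαφ v (by simp)).trans hφv⟩

theorem Homogeneous.exists_isAuto_apply_eq_of_mem_Y (hD : D.Homogeneous) {a b : V}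
    (ha : a ∈ D.Y) (hb : b ∈ D.Y) : ∃ α : Equiv.Perm V, D.IsAuto α ∧ α a = b := by
  obtain ⟨α, hα, hαφ⟩ := hD.swap.exists_isAuto_of_subset_X (Set.finite_singleton a)
    (Set.singleton_subset_iff.mpr ha) (φ := fun _ => b) (Set.injOn_singleton _ _)
    (fun _ _ => hb)
  exact ⟨α, isAuto_swap_iff.mp hα, hαφ a rfl⟩

theorem Homogeneous.Nplus_eq_of_Nplus_eq (hD : D.Homogeneous) {u v : V} (hu : u ∈ D.X)
    (hv : v ∈ D.X) (huv : u ≠ v) (hN : D.Nplus u = D.Nplus v) :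
    ∀ w ∈ D.X, D.Nplus w = D.Nplus u := by
  intro w hw
  obtain rfl | hwu := eq_or_ne w u
  · rfl
  obtain ⟨α, hα, hαu, rfl⟩ := hD.exists_isAuto_fix_apply_eq hu hv hw huv hwu.symm
  rw [hα.Nplus_apply, ← hN, ← hα.Nplus_apply, hαu]

theorem Homogeneous.not_E_of_Nplus_eq (hD : D.Homogeneous) {u v : V} (hu : u ∈ D.X)
    (hv : v ∈ D.X) (huv : u ≠ v) (hN : D.Nplus u = D.Nplus v) :
    ∀ y ∈ D.Nplus u, ∀ w ∈ D.X, ¬ D.E y w := by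
  intro y hy w hw hyw
  have hwy : D.E w y := by rwa [← hD.Nplus_eq_of_Nplus_eq hu hv huv hN w hw] at hy
  exact D.not_opposite w y hwy hyw

theorem Homogeneous.injOn_Nplus_X (hD : D.Homogeneous) (hnb : ¬ D.Bipartite) :
    Set.InjOn D.Nplus D.X := by
  intro u hu v hv hN
  by_contra huv
  obtain ⟨c, d, hcY, hdX, hcd⟩ := exists_E_of_mem_Y_of_not_bipartite hnb
  obtain ⟨a, b, haX, hbY, hab⟩ :=
    exists_E_of_mem_Y_of_not_bipartite (D := D.swap) (bipartite_swap_iff.not.mpr hnb)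
  obtain ⟨α, hα, rfl⟩ := hD.exists_isAuto_apply_eq_of_mem_Y hbY hcY
  have hc : α b ∈ D.Nplus u := by
    rw [← hD.Nplus_eq_of_Nplus_eq hu hv huv hN (α a) ((hα.1 a).mp haX)]
    exact (hα.2.2 a b).mp hab
  exact hD.not_E_of_Nplus_eq hu hv huv hN _ hc d hdX hcd

end TwoPartiteDigraph

open TwoPartiteDigraph

/-- In a homogeneous non-bipartite 2-partite digraph: if two distinct `u, v ∈ X` had
`N⁺(u) = N⁺(v)`, then every `w ∈ X` would satisfy `N⁺(w) = N⁺(u)` and no vertex of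
`N⁺(u)` would have a successor in `X`; hence no two distinct vertices on the same side
have equal out-neighbourhoods. -/
theorem stmt_19 {V : Type*} (D : TwoPartiteDigraph V) (hhom : D.Homogeneous)
    (hnb : ¬ D.Bipartite) :
    (∀ u ∈ D.X, ∀ v ∈ D.X, u ≠ v → D.Nplus u = D.Nplus v →
      (∀ w ∈ D.X, D.Nplus w = D.Nplus u) ∧
      ∀ y ∈ D.Nplus u, ∀ w ∈ D.X, ¬ D.E y w) ∧
    (∀ u ∈ D.X, ∀ v ∈ D.X, u ≠ v → D.Nplus u ≠ D.Nplus v) ∧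
    (∀ u ∈ D.Y, ∀ v ∈ D.Y, u ≠ v → D.Nplus u ≠ D.Nplus v) := by
  refine ⟨fun u hu v hv huv hN => ⟨hhom.Nplus_eq_of_Nplus_eq hu hv huv hN,
    hhom.not_E_of_Nplus_eq hu hv huv hN⟩, ?_, ?_⟩
  · exact fun u hu v hv huv hN => huv (hhom.injOn_Nplus_X hnb hu hv hN)
  · have hY : Set.InjOn D.swap.Nplus D.swap.X :=
      hhom.swap.injOn_Nplus_X (bipartite_swap_iff.not.mpr hnb)
    exact fun u hu v hv huv hN => huv (hY hu hv hN)
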